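/- arXiv:1209.2310 — 3 statements merged into one kernel-verified Lean document; each statement's English description precedes it below -/
import Mathlib

section
/- For λ > 0 and t, x, y > 0, the heat kernel h_λ(t,x,y) = (2t)^{-λ} e^{-(x+y)/t} Ĩ_{λ-1}(2√(xy)/t) on ℝ₊ satisfies the semigroup identity ∫_0^∞ h_λ(s,x,z) h_λ(t,y,z) dμ_λ(z) = h_λ(s+t,x,y) for all s, t > 0 and x, y > 0, where dμ_λ(z) = (2^λ/Γ(λ)) z^{λ-1} dz. -/
/-!
Expanding both kernels in their power series turns the `z`-integral into a double series of
Gamma integrals `∫ z^(m+n+l-1) e^(-(1/s+1/t) z) dz`. The result is a double series in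
`a = xt/(s(s+t))` and `b = ys/(t(s+t))` with coefficients `Γ(m+n+l) / (Γ(m+l) Γ(n+l) m! n!)`;
by the Chu–Vandermonde identity `∑ₖ C(m,k) C(n,k) k! / Γ(k+l) = Γ(m+n+l) / (Γ(m+l) Γ(n+l))`
it is the product of the series of `eᵃ`, `eᵇ` and `Ĩ_{l-1}(2√(ab))`. Since `ab = xy/(s+t)²` and
`a + b - x/s - y/t = -(x+y)/(s+t)`, this is `h_λ(s+t,x,y)`.
-/

open MeasureTheory Set

/-- The one-dimensional heat kernel
`h_λ(t,x,y) = (2t)^{-λ} e^{-(x+y)/t} Ĩ_{λ-1}(2√(xy)/t)` via the power series of `Ĩ`. -/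
noncomputable def heatKer (l t x y : ℝ) : ℝ :=
  (2 * t) ^ (-l) * Real.exp (-(x + y) / t) * Real.Gamma l *
    ∑' m : ℕ, (x * y / t ^ 2) ^ m / ((m.factorial : ℝ) * Real.Gamma ((m : ℝ) + l))

open Filter Finset Nat Real

/-- `besselISeries l u = Ĩ_{l-1}(2√u)`, so that `heatKer l t x y` unfolds to
`(2t)^(-l) e^(-(x+y)/t) Γ(l) besselISeries l (xy/t²)`. -/
noncomputable def besselISeries (l u : ℝ) : ℝ :=
  ∑' m : ℕ, u ^ m / ((m ! : ℝ) * Gamma ((m : ℝ) + l))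

theorem summable_besselISeries (l u : ℝ) :
    Summable fun m : ℕ => u ^ m / ((m ! : ℝ) * Gamma ((m : ℝ) + l)) := by
  refine .of_norm_bounded_eventually_nat (Real.summable_pow_div_factorial |u|) ?_
  filter_upwards [eventually_ge_atTop ⌈2 - l⌉₊] with m hm
  have h2 : 2 ≤ (m : ℝ) + l := by linarith [Nat.ceil_le.mp hm]
  have hΓ : 1 ≤ Gamma ((m : ℝ) + l) := Gamma_two ▸
    Gamma_strictMonoOn_Ici.monotoneOn (mem_Ici.2 le_rfl) (mem_Ici.2 h2) h2
  rw [norm_div, norm_pow, Real.norm_eq_abs, norm_mul, RCLike.norm_natCast,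
    Real.norm_of_nonneg (by linarith)]
  gcongr
  exact le_mul_of_one_le_right (by positivity) hΓ

theorem Real.Gamma_add_nat_eq_ascPochhammer_mul {x : ℝ} (hx : 0 < x) (n : ℕ) :
    Gamma (x + n) = (ascPochhammer ℝ n).eval x * Gamma x := by
  induction n with
  | zero => simp
  | succ n ih =>
    rw [Nat.cast_succ, ← add_assoc, Gamma_add_one (by positivity), ih, ascPochhammer_succ_eval]
    ring

theorem Ring.multichoose_eq_Gamma_div {x : ℝ} (hx : 0 < x) (n : ℕ) :
    Ring.multichoose x n = Gamma (x + n) / (n ! * Gamma x) := by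
  have h := Ring.factorial_nsmul_multichoose_eq_ascPochhammer x n
  rw [Polynomial.ascPochhammer_smeval_eq_eval, nsmul_eq_mul] at h
  rw [Real.Gamma_add_nat_eq_ascPochhammer_mul hx, ← h]
  field_simp

theorem sum_range_choose_mul_choose_mul_factorial_div_Gamma {l : ℝ} (hl : 0 < l) (m n : ℕ) :
    ∑ k ∈ range (n + 1), (m.choose k * n.choose k * k ! : ℝ) / Gamma (k + l)
      = Gamma (m + n + l) / (Gamma (m + l) * Gamma (n + l)) := by
  have vandermonde := Ring.add_choose_eq (r := (m : ℝ)) (s := l + n - 1) n (.all _ _)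
  rw [Finset.Nat.sum_antidiagonal_eq_sum_range_succ_mk] at vandermonde
  have hchoose {x : ℝ} (hx : 0 < x) (j : ℕ) :
      Ring.choose (x + j - 1) j = Gamma (x + j) / (j ! * Gamma x) := by
    rw [← Ring.multichoose_eq, Ring.multichoose_eq_Gamma_div hx]
  have hleft :
      Ring.choose ((m : ℝ) + (l + n - 1)) n = Gamma (m + n + l) / (n ! * Gamma (m + l)) := by
    rw [show (m : ℝ) + (l + n - 1) = (m + l) + n - 1 by ring, hchoose (by positivity),
      add_right_comm]
  calc ∑ k ∈ range (n + 1), (m.choose k * n.choose k * k ! : ℝ) / Gamma (k + l)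
      = n ! / Gamma (n + l) *
          ∑ k ∈ range (n + 1), Ring.choose (m : ℝ) k * Ring.choose (l + n - 1) (n - k) := by
        rw [mul_sum]
        refine sum_congr rfl fun k hk => ?_
        have hkn : k ≤ n := Nat.lt_succ_iff.mp (mem_range.mp hk)
        rw [Ring.choose_natCast, show l + n - 1 = (k + l) + ((n - k : ℕ) : ℝ) - 1 by
          rw [Nat.cast_sub hkn]; ring, hchoose (by positivity), Nat.cast_sub hkn,
          show (k : ℝ) + l + (n - k) = n + l by ring]
        have hfac : (n.choose k * k ! * (n - k)! : ℝ) = n ! := by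
          exact_mod_cast Nat.choose_mul_factorial_mul_factorial hkn
        rw [← hfac]
        field_simp
    _ = Gamma (m + n + l) / (Gamma (m + l) * Gamma (n + l)) := by
        rw [← vandermonde, hleft]
        field_simp

theorem hasSum_exp_mul_exp_mul_besselISeries {l a b : ℝ} (hl : 0 < l) (ha : 0 ≤ a)
    (hb : 0 ≤ b) :
    HasSum (fun w : (ℕ × ℕ) × ℕ => a ^ w.1.1 / w.1.1 ! * (b ^ w.1.2 / w.1.2 !) *
        ((a * b) ^ w.2 / (w.2 ! * Gamma (w.2 + l))))
      (exp a * exp b * besselISeries l (a * b)) := by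
  have hexp (x : ℝ) : HasSum (fun n : ℕ => x ^ n / n !) (exp x) := by
    simpa [Real.exp_eq_exp_ℝ] using NormedSpace.expSeries_div_hasSum_exp x
  have hnonneg {x : ℝ} (hx : 0 ≤ x) : 0 ≤ fun n : ℕ => x ^ n / n ! := fun n => by positivity
  have hS : HasSum (fun k : ℕ => (a * b) ^ k / (k ! * Gamma (k + l))) (besselISeries l (a * b)) :=
    (summable_besselISeries l (a * b)).hasSum
  have hAB := (hexp a).summable.mul_of_nonneg (hexp b).summable (hnonneg ha) (hnonneg hb)
  exact ((hexp a).mul (hexp b) hAB).mul hS <| hAB.mul_of_nonneg hS.summable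
    (fun _ => mul_nonneg (hnonneg ha _) (hnonneg hb _)) fun k => by positivity

theorem hasSum_Gamma_div_mul_pow_div_factorial_mul_pow_div_factorial {l a b : ℝ} (hl : 0 < l)
    (ha : 0 ≤ a) (hb : 0 ≤ b) :
    HasSum (fun mn : ℕ × ℕ => Gamma (mn.1 + mn.2 + l) / (Gamma (mn.1 + l) * Gamma (mn.2 + l)) *
        (a ^ mn.1 / mn.1 ! * (b ^ mn.2 / mn.2 !)))
      (exp a * exp b * besselISeries l (a * b)) := by
  -- Pulled back along `((p, q), k) ↦ ((p + k, q + k), k)`, `F` is the triple product of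
  -- `hasSum_exp_mul_exp_mul_besselISeries`; its fibre over `(m, n)` is the Chu–Vandermonde sum.
  set F : (ℕ × ℕ) × ℕ → ℝ := fun w =>
    (w.1.1.choose w.2 * w.1.2.choose w.2 * w.2 ! : ℝ) / Gamma (w.2 + l) *
      (a ^ w.1.1 / w.1.1 ! * (b ^ w.1.2 / w.1.2 !))
  set ψ : (ℕ × ℕ) × ℕ → (ℕ × ℕ) × ℕ := fun w => ((w.1.1 + w.2, w.1.2 + w.2), w.2)
  have hψ : Function.Injective ψ := by
    rintro ⟨⟨p, q⟩, k⟩ ⟨⟨p', q'⟩, k'⟩ h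
    simp only [ψ, Prod.mk.injEq] at h
    grind
  have hFψ : F ∘ ψ = fun w => a ^ w.1.1 / w.1.1 ! * (b ^ w.1.2 / w.1.2 !) *
      ((a * b) ^ w.2 / (w.2 ! * Gamma (w.2 + l))) := by
    ext ⟨⟨p, q⟩, k⟩
    have hp : ((p + k).choose k * p ! * k ! : ℝ) = (p + k)! := by
      exact_mod_cast Nat.add_choose_mul_factorial_mul_factorial p k
    have hq : ((q + k).choose k * q ! * k ! : ℝ) = (q + k)! := by
      exact_mod_cast Nat.add_choose_mul_factorial_mul_factorial q k
    have : 0 < ((p + k).choose k : ℝ) := by exact_mod_cast Nat.choose_pos (by omega)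
    have : 0 < ((q + k).choose k : ℝ) := by exact_mod_cast Nat.choose_pos (by omega)
    simp only [F, ψ, Function.comp_apply]
    rw [← hp, ← hq]
    field_simp
    ring
  have hF : HasSum F (exp a * exp b * besselISeries l (a * b)) := by
    refine (hψ.hasSum_iff fun ⟨⟨m, n⟩, k⟩ hw => ?_).mp
      (hFψ ▸ hasSum_exp_mul_exp_mul_besselISeries hl ha hb)
    by_cases hk : k ≤ m ∧ k ≤ n
    · refine (hw ⟨((m - k, n - k), k), ?_⟩).elim
      simp [ψ, Nat.sub_add_cancel hk.1, Nat.sub_add_cancel hk.2]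
    · rcases not_and_or.mp hk with hk | hk <;>
        simp [F, Nat.choose_eq_zero_of_lt (not_le.mp hk)]
  refine hF.prod_fiberwise fun ⟨m, n⟩ => ?_
  rw [← sum_range_choose_mul_choose_mul_factorial_div_Gamma hl, sum_mul]
  exact hasSum_sum_of_ne_finset_zero fun k hk => by
    simp [F, Nat.choose_eq_zero_of_lt (show n < k by simpa using hk)]

theorem integrableOn_rpow_sub_one_mul_exp_neg_mul {a c : ℝ} (ha : 0 < a) (hc : 0 < c) :
    IntegrableOn (fun z : ℝ => z ^ (a - 1) * exp (-(c * z))) (Ioi 0) := by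
  refine (integrableOn_rpow_mul_exp_neg_mul_rpow (s := a - 1) (p := 1) (by linarith) one_pos
    hc).congr_fun (fun z _ => ?_) measurableSet_Ioi
  simp only [rpow_one, neg_mul]

theorem besselISeries_mul_besselISeries_mul_rpow {l α β z : ℝ} (hl : 0 < l) (hα : 0 ≤ α)
    (hβ : 0 ≤ β) (hz : 0 < z) :
    besselISeries l (α * z) * besselISeries l (β * z) * z ^ (l - 1)
      = ∑' mn : ℕ × ℕ, α ^ mn.1 / (mn.1 ! * Gamma (mn.1 + l)) *
          (β ^ mn.2 / (mn.2 ! * Gamma (mn.2 + l))) * z ^ ((mn.1 + mn.2 + l : ℝ) - 1) := by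
  have hS (γ : ℝ) := summable_besselISeries l (γ * z)
  have hterm {γ : ℝ} (hγ : 0 ≤ γ) :
      0 ≤ fun m : ℕ => (γ * z) ^ m / (m ! * Gamma (m + l)) := fun m => by positivity
  rw [besselISeries, besselISeries, (hS α).tsum_mul_tsum (hS β)
    ((hS α).mul_of_nonneg (hS β) (hterm hα) (hterm hβ)), ← tsum_mul_right]
  refine tsum_congr fun mn => ?_
  rw [show (mn.1 + mn.2 + l : ℝ) - 1 = mn.1 + mn.2 + (l - 1) by ring, rpow_add hz,
    rpow_add hz, rpow_natCast, rpow_natCast]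
  ring

theorem integral_besselISeries_mul_besselISeries {l c α β : ℝ} (hl : 0 < l) (hc : 0 < c)
    (hα : 0 ≤ α) (hβ : 0 ≤ β) :
    ∫ z : ℝ in Ioi 0, besselISeries l (α * z) * besselISeries l (β * z) *
        (z ^ (l - 1) * exp (-(c * z)))
      = (1 / c) ^ l * (exp (α / c) * exp (β / c) * besselISeries l (α / c * (β / c))) := by
  set g : ℕ × ℕ → ℝ → ℝ := fun mn z =>
    α ^ mn.1 / (mn.1 ! * Gamma (mn.1 + l)) * (β ^ mn.2 / (mn.2 ! * Gamma (mn.2 + l))) *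
      (z ^ ((mn.1 + mn.2 + l : ℝ) - 1) * exp (-(c * z)))
  have hg_int (mn : ℕ × ℕ) : IntegrableOn (g mn) (Ioi 0) :=
    (integrableOn_rpow_sub_one_mul_exp_neg_mul (by positivity) hc).const_mul _
  have hg_nonneg (mn : ℕ × ℕ) : ∀ z ∈ Ioi (0 : ℝ), 0 ≤ g mn z :=
    fun z (hz : 0 < z) => by positivity
  have hg_integral (mn : ℕ × ℕ) : ∫ z in Ioi 0, g mn z = (1 / c) ^ l *
      (Gamma (mn.1 + mn.2 + l) / (Gamma (mn.1 + l) * Gamma (mn.2 + l)) *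
        ((α / c) ^ mn.1 / mn.1 ! * ((β / c) ^ mn.2 / mn.2 !))) := by
    rw [integral_const_mul, integral_rpow_mul_exp_neg_mul_Ioi (by positivity) hc,
      rpow_add (by positivity), rpow_add (by positivity), rpow_natCast, rpow_natCast]
    simp only [div_pow, one_pow]
    field_simp
  have hsum : HasSum (fun mn => ∫ z in Ioi 0, g mn z)
      ((1 / c) ^ l * (exp (α / c) * exp (β / c) * besselISeries l (α / c * (β / c)))) := by
    simp_rw [hg_integral]
    exact (hasSum_Gamma_div_mul_pow_div_factorial_mul_pow_div_factorial hl
      (by positivity) (by positivity)).mul_left _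
  have hnorm (mn : ℕ × ℕ) : ∫ z in Ioi 0, ‖g mn z‖ = ∫ z in Ioi 0, g mn z :=
    setIntegral_congr_fun measurableSet_Ioi fun z hz => Real.norm_of_nonneg (hg_nonneg mn z hz)
  have hpointwise : ∀ z ∈ Ioi (0 : ℝ), besselISeries l (α * z) * besselISeries l (β * z) *
      (z ^ (l - 1) * exp (-(c * z))) = ∑' mn, g mn z := fun z (hz : 0 < z) => by
    rw [← mul_assoc, besselISeries_mul_besselISeries_mul_rpow hl hα hβ hz, ← tsum_mul_right]
    simp only [g, mul_assoc]
  rw [setIntegral_congr_fun measurableSet_Ioi hpointwise]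
  refine (hasSum_integral_of_summable_integral_norm hg_int ?_).unique hsum
  simpa only [hnorm] using hsum.summable

theorem heatKer_mul_heatKer_mul_density {l s t : ℝ} (hl : 0 < l) (hs : 0 < s) (ht : 0 < t)
    (x y z : ℝ) :
    heatKer l s x z * heatKer l t y z * ((2 : ℝ) ^ l / Gamma l * z ^ (l - 1))
      = (2 * s) ^ (-l) * (2 * t) ^ (-l) * 2 ^ l * Gamma l * exp (-(x / s) - y / t) *
        (besselISeries l (x / s ^ 2 * z) * besselISeries l (y / t ^ 2 * z) *
          (z ^ (l - 1) * exp (-((1 / s + 1 / t) * z)))) := by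
  have hexp : exp (-(x + z) / s) * exp (-(y + z) / t)
      = exp (-(x / s) - y / t) * exp (-((1 / s + 1 / t) * z)) := by
    rw [← exp_add, ← exp_add]
    congr 1
    field_simp
    ring
  have hΓ : Gamma l ≠ 0 := by positivity
  rw [heatKer, heatKer, ← besselISeries, ← besselISeries, mul_div_right_comm x,
    mul_div_right_comm y]
  calc _ = (2 * s) ^ (-l) * (2 * t) ^ (-l) * 2 ^ l * (Gamma l * Gamma l / Gamma l) *
        (exp (-(x + z) / s) * exp (-(y + z) / t)) *
        (besselISeries l (x / s ^ 2 * z) * besselISeries l (y / t ^ 2 * z) * z ^ (l - 1)) := by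
        ring
    _ = _ := by
        rw [hexp, mul_div_cancel_right₀ _ hΓ]
        ring

theorem two_mul_rpow_neg_mul_two_mul_rpow_neg {l s t : ℝ} (hs : 0 < s) (ht : 0 < t) :
    (2 * s) ^ (-l) * (2 * t) ^ (-l) * 2 ^ l * (s * t / (s + t)) ^ l = (2 * (s + t)) ^ (-l) := by
  have key :
      (2 : ℝ) ^ l * (s * t / (s + t)) ^ l * (2 * (s + t)) ^ l = (2 * s) ^ l * (2 * t) ^ l := by
    rw [← mul_rpow (by norm_num) (by positivity), ← mul_rpow (by positivity) (by positivity),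
      ← mul_rpow (by positivity) (by positivity)]
    congr 1
    field_simp
  rw [rpow_neg (by positivity), rpow_neg (by positivity), rpow_neg (by positivity)]
  field_simp
  linear_combination key

/-- Semigroup property:
`∫_0^∞ h_λ(s,x,z) h_λ(t,y,z) dμ_λ(z) = h_λ(s+t,x,y)` where
`dμ_λ(z) = (2^λ/Γ(λ)) z^{λ-1} dz`. -/
theorem stmt2 (l : ℝ) (hl : 0 < l) (s t x y : ℝ) (hs : 0 < s) (ht : 0 < t)
    (hx : 0 < x) (hy : 0 < y) :
    ∫ z : ℝ in Ioi 0,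
        heatKer l s x z * heatKer l t y z * ((2 : ℝ) ^ l / Real.Gamma l * z ^ (l - 1))
      = heatKer l (s + t) x y := by
  have hc : 1 / (1 / s + 1 / t) = s * t / (s + t) := by
    field_simp
    ring
  have harg :
      x / s ^ 2 / (1 / s + 1 / t) * (y / t ^ 2 / (1 / s + 1 / t)) = x * y / (s + t) ^ 2 := by
    field_simp
    ring
  have hexp : exp (-(x / s) - y / t) *
      (exp (x / s ^ 2 / (1 / s + 1 / t)) * exp (y / t ^ 2 / (1 / s + 1 / t)))
      = exp (-(x + y) / (s + t)) := by
    rw [← exp_add, ← exp_add]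
    congr 1
    field_simp
    ring
  simp_rw [heatKer_mul_heatKer_mul_density hl hs ht]
  rw [integral_const_mul, integral_besselISeries_mul_besselISeries hl (by positivity)
    (by positivity) (by positivity), harg, hc, heatKer, ← besselISeries,
    ← two_mul_rpow_neg_mul_two_mul_rpow_neg hs ht, ← hexp]
  ring
end

section
/- For λ > 0 and fixed y > 0, the function u(t,x) = h_λ(t,x,y) = (2t)^{-λ} e^{-(x+y)/t} Ĩ_{λ-1}(2√(xy)/t) solves the heat equation x ∂²u/∂x² + λ ∂u/∂x = ∂u/∂t on (0,∞) × (0,∞). -/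
/-!
With `F(z) = ∑ z^m / (m! Γ(m + λ))` the kernel is `Γ(λ) (2t)^{-λ} e^{-(x+y)/t} F(xy/t²)`.
The coefficients `c_m` of `F` satisfy `c_m = (m + λ)(m + 1) c_{m+1}`: this is the coefficient form
of `z F'' + λ F' = F`, and by the ratio test it also makes `F` entire, so it may be differentiated
termwise. By the chain rule, `x u_xx + λ u_x - u_t` equals
`Γ(λ) (2t)^{-λ} e^{-(x+y)/t} (y/t²) (z F'' + λ F' - F)` at `z = xy/t²`, which vanishes.
-/

open MeasureTheory Set

noncomputable def powerSeriesSum (c : ℕ → ℝ) (z : ℝ) : ℝ := ∑' n, c n * z ^ n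

noncomputable def derivCoeff (c : ℕ → ℝ) (n : ℕ) : ℝ := (n + 1) * c (n + 1)

def EntireCoeffs (c : ℕ → ℝ) : Prop :=
  ∀ R : ℝ, 0 ≤ R → Summable fun n => |c n| * R ^ n

/-- The coefficient form of the ODE `z F'' + l F' = F` for `F = powerSeriesSum c`. -/
def BesselRecurrence (l : ℝ) (c : ℕ → ℝ) : Prop := ∀ n, c n = (n + l) * derivCoeff c n

noncomputable def besselCoeff (l : ℝ) (n : ℕ) : ℝ :=
  ((n.factorial : ℝ) * Real.Gamma (n + l))⁻¹

section PowerSeries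

variable {c : ℕ → ℝ}

lemma EntireCoeffs.summable (hc : EntireCoeffs c) (z : ℝ) : Summable fun n => c n * z ^ n :=
  .of_norm_bounded (hc |z| (abs_nonneg z)) fun n => by
    rw [norm_mul, norm_pow, Real.norm_eq_abs, Real.norm_eq_abs]

lemma hasDerivAt_powerSeriesSum (hc : EntireCoeffs (derivCoeff c)) (z : ℝ) :
    HasDerivAt (powerSeriesSum c) (powerSeriesSum (derivCoeff c) z) z := by
  set R := |z| + 1
  have hz : z ∈ Metric.ball (0 : ℝ) R := by simp [R]
  have hbound : ∀ n, ∀ w ∈ Metric.ball (0 : ℝ) R,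
      ‖c n * (n * w ^ (n - 1))‖ ≤ |c n| * n * R ^ (n - 1) := by
    intro n w hw
    rw [mem_ball_zero_iff, Real.norm_eq_abs] at hw
    rw [Real.norm_eq_abs, abs_mul, abs_mul, abs_pow, Nat.abs_cast, ← mul_assoc]
    gcongr
  have hu : Summable fun n => |c n| * n * R ^ (n - 1) := by
    rw [← summable_nat_add_iff 1]
    refine (hc R (by positivity)).congr fun n => ?_
    simp only [derivCoeff, abs_mul, Nat.add_sub_cancel]
    rw [abs_of_nonneg (by positivity : (0 : ℝ) ≤ n + 1)]
    push_cast
    ring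
  have h0 : Summable fun n => c n * (0 : ℝ) ^ n :=
    summable_of_ne_finset_zero (s := {0}) fun n hn => by simp_all
  refine (hasDerivAt_tsum_of_isPreconnected hu Metric.isOpen_ball
    (convex_ball (0 : ℝ) R).isPreconnected (fun n w _ => (hasDerivAt_pow n w).const_mul (c n))
    hbound (Metric.mem_ball_self (by positivity)) h0 hz).congr_deriv ?_
  have hshift (n : ℕ) :
      c (n + 1) * ((n + 1 : ℕ) * z ^ (n + 1 - 1)) = derivCoeff c n * z ^ n := by
    simp only [derivCoeff, Nat.add_sub_cancel]
    push_cast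
    ring
  rw [tsum_eq_zero_add' ((hc.summable z).congr fun n => (hshift n).symm)]
  simp only [hshift, CharP.cast_eq_zero, zero_mul, mul_zero, zero_add, powerSeriesSum]

lemma hasSum_mul_powerSeriesSum_derivCoeff (hc : EntireCoeffs (derivCoeff c)) (z : ℝ) :
    HasSum (fun n => n * c n * z ^ n) (z * powerSeriesSum (derivCoeff c) z) := by
  rw [← hasSum_nat_add_iff' 1]
  simpa [powerSeriesSum, derivCoeff, pow_succ, mul_comm, mul_left_comm, mul_assoc] using
    ((hc.summable z).hasSum.mul_left z)

end PowerSeries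

namespace BesselRecurrence

variable {l : ℝ} {c : ℕ → ℝ}

lemma derivCoeff (h : BesselRecurrence l c) : BesselRecurrence (l + 1) (derivCoeff c) := by
  intro n
  simp only [_root_.derivCoeff]
  rw [h (n + 1)]
  simp only [_root_.derivCoeff]
  push_cast
  ring

lemma entireCoeffs (h : BesselRecurrence l c) : EntireCoeffs c := by
  intro R hR
  obtain ⟨N, hN⟩ := exists_nat_ge (2 * R + |l|)
  refine summable_of_ratio_norm_eventually_le (r := 1 / 2) (by norm_num) ?_
  filter_upwards [Filter.eventually_ge_atTop N] with n hn
  have hn : 2 * R + |l| ≤ n := hN.trans (by exact_mod_cast hn)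
  have hnl : 2 * R ≤ n + l := by linarith [neg_abs_le l]
  rw [Real.norm_of_nonneg (by positivity), Real.norm_of_nonneg (by positivity), h n,
    _root_.derivCoeff, abs_mul, abs_mul, abs_of_nonneg (by linarith : (0 : ℝ) ≤ n + l),
    abs_of_nonneg (by positivity : (0 : ℝ) ≤ n + 1), pow_succ]
  have hprod : 2 * R ≤ (n + l) * (n + 1) := by nlinarith
  have ha : 0 ≤ |c (n + 1)| * R ^ n := by positivity
  nlinarith [mul_le_mul_of_nonneg_right hprod ha]

lemma powerSeriesSum_ode (h : BesselRecurrence l c) (z : ℝ) :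
    z * powerSeriesSum (_root_.derivCoeff (_root_.derivCoeff c)) z
      + l * powerSeriesSum (_root_.derivCoeff c) z = powerSeriesSum c z := by
  have hsum := (hasSum_mul_powerSeriesSum_derivCoeff h.derivCoeff.derivCoeff.entireCoeffs z).add
    ((h.derivCoeff.entireCoeffs.summable z).hasSum.mul_left l)
  refine (HasSum.tsum_eq ?_).symm
  convert hsum using 1
  · funext n
    rw [h n]
    ring
  · rfl

end BesselRecurrence

lemma besselRecurrence_besselCoeff {l : ℝ} (hl : 0 < l) : BesselRecurrence l (besselCoeff l) := by
  intro n
  have hnl : (0 : ℝ) < n + l := by positivity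
  have hG : Real.Gamma (n + l) ≠ 0 := (Real.Gamma_pos_of_pos hnl).ne'
  simp only [besselCoeff, derivCoeff, Nat.factorial_succ]
  rw [show ((n + 1 : ℕ) : ℝ) + l = (n + l) + 1 by push_cast; ring, Real.Gamma_add_one hnl.ne']
  push_cast
  field_simp

noncomputable def heatProfile (F : ℝ → ℝ) (l t x y : ℝ) : ℝ :=
  (2 * t) ^ (-l) * (Real.exp (-(x + y) / t) * F (x * y / t ^ 2))

lemma heatKer_eq_heatProfile (l t x y : ℝ) :
    heatKer l t x y = Real.Gamma l * heatProfile (powerSeriesSum (besselCoeff l)) l t x y := by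
  simp only [heatKer, heatProfile, powerSeriesSum, besselCoeff, div_eq_inv_mul]
  ring

section HeatProfile

variable {F : ℝ → ℝ} {l t x y : ℝ}

lemma hasDerivAt_heatProfile_x {F' : ℝ → ℝ} (hF : ∀ z, HasDerivAt F (F' z) z) :
    HasDerivAt (fun x => heatProfile F l t x y)
      (heatProfile (fun z => y / t ^ 2 * F' z - F z / t) l t x y) x := by
  have hexp : HasDerivAt (fun x => Real.exp (-(x + y) / t))
      (Real.exp (-(x + y) / t) * (-1 / t)) x :=
    (((hasDerivAt_id x).add_const y).neg.div_const t).exp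
  have hz : HasDerivAt (fun x => x * y / t ^ 2) (y / t ^ 2) x := by
    simpa using ((hasDerivAt_id x).mul_const y).div_const (t ^ 2)
  refine ((hexp.mul ((hF _).comp x hz)).const_mul ((2 * t) ^ (-l))).congr_deriv ?_
  simp only [heatProfile, Function.comp_apply]
  ring

lemma hasDerivAt_heatProfile_t {F' : ℝ} (hF : HasDerivAt F F' (x * y / t ^ 2)) (ht : t ≠ 0) :
    HasDerivAt (fun t => heatProfile F l t x y)
      ((2 * t) ^ (-l) * (Real.exp (-(x + y) / t) *
        (((x + y) / t ^ 2 - l / t) * F (x * y / t ^ 2) - 2 * x * y / t ^ 3 * F'))) t := by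
  have hpow : HasDerivAt (fun t => (2 * t) ^ (-l)) (2 * (-l) * (2 * t) ^ (-l - 1)) t := by
    simpa using ((hasDerivAt_id t).const_mul 2).rpow_const (p := -l) (Or.inl (by simpa))
  have hexp : HasDerivAt (fun t => Real.exp (-(x + y) / t))
      (Real.exp (-(x + y) / t) * ((0 * t - -(x + y) * 1) / t ^ 2)) t :=
    ((hasDerivAt_const t (-(x + y))).fun_div (hasDerivAt_id t) ht).exp
  have hz := (hasDerivAt_const t (x * y)).fun_div (hasDerivAt_pow 2 t) (pow_ne_zero 2 ht)
  refine (hpow.mul (hexp.mul (hF.comp t hz))).congr_deriv ?_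
  rw [Real.rpow_sub_one (mul_ne_zero two_ne_zero ht)]
  simp only [Pi.mul_apply, Function.comp_apply]
  field_simp
  ring

end HeatProfile

theorem stmt3_general (l : ℝ) (hl : 0 < l) (y : ℝ) :
    ∀ t x : ℝ, 0 < t → 0 < x →
      x * deriv (deriv (fun x' => heatKer l t x' y)) x
        + l * deriv (fun x' => heatKer l t x' y) x
      = deriv (fun t' => heatKer l t' x y) t := by
  intro t x ht _
  simp only [heatKer_eq_heatProfile]
  have hrec := besselRecurrence_besselCoeff hl
  set c := besselCoeff l
  have hF := hasDerivAt_powerSeriesSum hrec.derivCoeff.entireCoeffs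
  have hF' := hasDerivAt_powerSeriesSum hrec.derivCoeff.derivCoeff.entireCoeffs
  have hG : ∀ z, HasDerivAt
      (fun z => y / t ^ 2 * powerSeriesSum (derivCoeff c) z - powerSeriesSum c z / t)
      (y / t ^ 2 * powerSeriesSum (derivCoeff (derivCoeff c)) z
        - powerSeriesSum (derivCoeff c) z / t) z :=
    fun z => ((hF' z).const_mul _).sub ((hF z).div_const t)
  have hux : deriv (fun x' => Real.Gamma l * heatProfile (powerSeriesSum c) l t x' y)
      = fun x' => Real.Gamma l * heatProfile
        (fun z => y / t ^ 2 * powerSeriesSum (derivCoeff c) z - powerSeriesSum c z / t) l t x' y :=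
    funext fun x' => ((hasDerivAt_heatProfile_x hF).const_mul _).deriv
  rw [hux, ((hasDerivAt_heatProfile_x hG).const_mul _).deriv,
    ((hasDerivAt_heatProfile_t (hF _) ht.ne').const_mul _).deriv]
  simp only [heatProfile]
  linear_combination (Real.Gamma l * (2 * t) ^ (-l) * Real.exp (-(x + y) / t) * y / t ^ 2) *
    hrec.powerSeriesSum_ode (x * y / t ^ 2)

/-- For fixed `y > 0`, `u(t,x) = h_λ(t,x,y)` solves the heat equation
`x ∂²u/∂x² + λ ∂u/∂x = ∂u/∂t` on `(0,∞) × (0,∞)`. -/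
theorem stmt3 (l : ℝ) (hl : 0 < l) (y : ℝ) (hy : 0 < y) :
    ∀ t x : ℝ, 0 < t → 0 < x →
      x * deriv (deriv (fun x' => heatKer l t x' y)) x
        + l * deriv (fun x' => heatKer l t x' y) x
      = deriv (fun t' => heatKer l t' x y) t :=
  stmt3_general l hl y
end

section
/- For λ > 0 there exists a constant C > 0 such that the one-dimensional heat kernel satisfies the bound h_λ(t,x,y) ≤ C t^{-λ} (1 + xy/t²)^{1/4} e^{-(x+y-2√(xy))/t} = C t^{-λ} (1 + xy/t²)^{1/4} e^{-(√x-√y)²/t} for all t > 0 and x, y > 0. -/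
open Real
open scoped Nat

namespace Real

theorem Gamma_add_le_rpow_mul_Gamma {x s : ℝ} (hx : 0 < x) (hs₀ : 0 ≤ s) (hs₁ : s ≤ 1) :
    Gamma (x + s) ≤ x ^ s * Gamma x := by
  rcases hs₀.eq_or_lt with rfl | hs₀
  · simp
  rcases hs₁.eq_or_lt with rfl | hs₁
  · simp [Gamma_add_one hx.ne']
  have hΓ : 0 ≤ Gamma x := (Gamma_pos_of_pos hx).le
  calc Gamma (x + s) = Gamma ((1 - s) * x + s * (x + 1)) := by ring_nf
    _ ≤ Gamma x ^ (1 - s) * Gamma (x + 1) ^ s :=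
      Gamma_mul_add_mul_le_rpow_Gamma_mul_rpow_Gamma hx (by linarith) (by linarith) hs₀ (by ring)
    _ = x ^ s * Gamma x := by
      rw [Gamma_add_one hx.ne', mul_rpow hx.le hΓ, mul_left_comm, ← rpow_add' hΓ (by norm_num),
        sub_add_cancel, rpow_one]

theorem Gamma_nat_add_mul_Gamma_le {a b : ℝ} (ha : 0 < a) (hab : a ≤ b) (m : ℕ) :
    Gamma (m + a) * Gamma b ≤ Gamma a * Gamma (m + b) := by
  induction m with
  | zero => simp
  | succ m ih =>
    have hma : 0 < m + a := by positivity
    have hΓ : 0 ≤ Gamma (m + a) * Gamma b :=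
      mul_nonneg (Gamma_pos_of_pos hma).le (Gamma_pos_of_pos (ha.trans_le hab)).le
    calc Gamma ((m + 1 : ℕ) + a) * Gamma b = (m + a) * (Gamma (m + a) * Gamma b) := by
          rw [Nat.cast_succ, add_right_comm, Gamma_add_one hma.ne', mul_assoc]
      _ ≤ (m + b) * (Gamma a * Gamma (m + b)) :=
          mul_le_mul (by linarith) ih hΓ (by linarith)
      _ = Gamma a * Gamma ((m + 1 : ℕ) + b) := by
          rw [Nat.cast_succ, add_right_comm, Gamma_add_one (by linarith)]; ring

theorem Gamma_nat_add_half_le {l : ℝ} (hl : 0 < l) (m : ℕ) :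
    Gamma (m + 1 / 2) ≤ Gamma (min l (1 / 2)) / Gamma l * √(m + 1) * Gamma (m + l) := by
  set l' := min l (1 / 2)
  have hl' : 0 < l' := lt_min hl one_half_pos
  have hl'l : l' ≤ l := min_le_left _ _
  have hl'half : l' ≤ 1 / 2 := min_le_right _ _
  have hΓm : 0 ≤ Gamma (m + l') := (Gamma_pos_of_pos (by positivity)).le
  have hpow : (m + l') ^ (1 / 2 - l') ≤ √(m + 1) := by
    rw [sqrt_eq_rpow]
    calc (m + l') ^ (1 / 2 - l') ≤ (m + 1) ^ (1 / 2 - l') :=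
          rpow_le_rpow (by positivity) (by linarith) (by linarith)
      _ ≤ (m + 1) ^ (1 / 2 : ℝ) :=
          rpow_le_rpow_of_exponent_le (by linarith [m.cast_nonneg (α := ℝ)]) (by linarith)
  calc Gamma (m + 1 / 2) = Gamma ((m + l') + (1 / 2 - l')) := by ring_nf
    _ ≤ (m + l') ^ (1 / 2 - l') * Gamma (m + l') :=
        Gamma_add_le_rpow_mul_Gamma (by positivity) (by linarith) (by linarith)
    _ ≤ √(m + 1) * Gamma (m + l') := mul_le_mul_of_nonneg_right hpow hΓm
    _ ≤ √(m + 1) * (Gamma l' * Gamma (m + l) / Gamma l) := by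
        gcongr
        rw [le_div_iff₀ (Gamma_pos_of_pos hl)]
        exact Gamma_nat_add_mul_Gamma_le hl' hl'l m
    _ = Gamma l' / Gamma l * √(m + 1) * Gamma (m + l) := by ring

theorem Gamma_nat_add_half_mul_factorial (m : ℕ) :
    Gamma (m + 1 / 2) * m ! = (2 * m)! * √π / 4 ^ m := by
  have h := Gamma_mul_Gamma_add_half (m + 1 / 2)
  rw [add_assoc, add_halves, Gamma_nat_eq_factorial,
    show 2 * ((m : ℝ) + 1 / 2) = (2 * m : ℕ) + 1 by push_cast; ring, Gamma_nat_eq_factorial,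
    show (1 : ℝ) - ((2 * m : ℕ) + 1) = -(2 * m : ℕ) by ring, rpow_neg zero_le_two,
    rpow_natCast, pow_mul] at h
  rw [h]
  norm_num
  ring

end Real

theorem hasSum_nat_mul_cosh_series (z : ℝ) :
    HasSum (fun m : ℕ => m * (z ^ (2 * m) / (2 * m)!)) (z / 2 * sinh z) := by
  rw [← hasSum_nat_add_iff' 1, Finset.sum_range_one, Nat.cast_zero, zero_mul, sub_zero]
  refine ((hasSum_sinh z).mul_left (z / 2)).congr_fun fun m => ?_
  rw [show 2 * (m + 1) = 2 * m + 1 + 1 by ring, Nat.factorial_succ, pow_succ]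
  push_cast
  field_simp
  ring

theorem summable_sqrt_succ_mul_cosh_series {z : ℝ} (hz : 0 ≤ z) :
    Summable (fun m : ℕ => √(m + 1) * (z ^ (2 * m) / (2 * m)!)) := by
  refine ((hasSum_nat_mul_cosh_series z).add (hasSum_cosh z)).summable.of_nonneg_of_le
    (fun m => by positivity) fun m => ?_
  rw [← add_one_mul]
  have hm : (1 : ℝ) ≤ m + 1 := by linarith [m.cast_nonneg (α := ℝ)]
  gcongr
  exact (sqrt_le_left (by linarith)).2 (by nlinarith)

theorem tsum_sqrt_succ_mul_cosh_series_le {z : ℝ} (hz : 0 ≤ z) :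
    ∑' m : ℕ, √(m + 1) * (z ^ (2 * m) / (2 * m)!) ≤ √(1 + z / 2) * exp z := by
  set a := √(1 + z / 2)
  have ha : 0 < a := sqrt_pos.2 (by linarith)
  have amgm (m : ℕ) : √((m : ℝ) + 1) ≤ 1 / (2 * a) * m + (1 / (2 * a) + a / 2) := by
    have : 1 / (2 * a) * m + (1 / (2 * a) + a / 2) - √((m : ℝ) + 1) =
        (√((m : ℝ) + 1) - a) ^ 2 / (2 * a) := by
      field_simp
      nlinarith [sq_sqrt (show (0 : ℝ) ≤ m + 1 by positivity)]
    linarith [show 0 ≤ (√((m : ℝ) + 1) - a) ^ 2 / (2 * a) by positivity]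
  have hmaj := ((hasSum_nat_mul_cosh_series z).mul_left (1 / (2 * a))).add
    ((hasSum_cosh z).mul_left (1 / (2 * a) + a / 2))
  have hle (m : ℕ) : √(m + 1) * (z ^ (2 * m) / (2 * m)!) ≤
      1 / (2 * a) * (m * (z ^ (2 * m) / (2 * m)!)) +
        (1 / (2 * a) + a / 2) * (z ^ (2 * m) / (2 * m)!) := by
    rw [← mul_assoc, ← add_mul]
    exact mul_le_mul_of_nonneg_right (amgm m) (by positivity)
  have hsinh : sinh z ≤ exp z := by linarith [cosh_add_sinh z, cosh_pos z]
  have hcosh : cosh z ≤ exp z := by linarith [cosh_add_sinh z, sinh_nonneg_iff.2 hz]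
  calc ∑' m : ℕ, √(m + 1) * (z ^ (2 * m) / (2 * m)!)
      ≤ 1 / (2 * a) * (z / 2 * sinh z) + (1 / (2 * a) + a / 2) * cosh z :=
        hasSum_le hle (hmaj.summable.of_nonneg_of_le (fun m => by positivity) hle).hasSum hmaj
    _ ≤ 1 / (2 * a) * (z / 2 * exp z) + (1 / (2 * a) + a / 2) * exp z := by gcongr
    _ = a * exp z := by
        field_simp
        rw [sq_sqrt (by linarith)]
        ring

theorem pow_div_factorial_mul_Gamma_le {l q : ℝ} (hl : 0 < l) (hq : 0 ≤ q) (m : ℕ) :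
    q ^ m / (m ! * Gamma (m + l)) ≤
      Gamma (min l (1 / 2)) / (Gamma l * √π) *
        (√(m + 1) * ((2 * √q) ^ (2 * m) / (2 * m)!)) := by
  have hΓ : 0 < Gamma (m + 1 / 2) := by positivity
  have hΓl : 0 < Gamma (m + l) := Gamma_pos_of_pos (by positivity)
  have hfac : ((2 * m)! : ℝ) = Gamma (m + 1 / 2) * m ! * 4 ^ m / √π := by
    rw [Gamma_nat_add_half_mul_factorial]
    field_simp
  calc q ^ m / (m ! * Gamma (m + l))
      = q ^ m / (m ! * Gamma (m + 1 / 2)) * (Gamma (m + 1 / 2) / Gamma (m + l)) := by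
        field_simp
    _ ≤ q ^ m / (m ! * Gamma (m + 1 / 2)) * (Gamma (min l (1 / 2)) / Gamma l * √(m + 1)) := by
        gcongr
        rw [div_le_iff₀ hΓl]
        exact Gamma_nat_add_half_le hl m
    _ = _ := by
        have hpow : (2 * √q) ^ (2 * m) = 4 ^ m * q ^ m := by
          rw [pow_mul, mul_pow, sq_sqrt hq, mul_pow]
          norm_num
        rw [hfac, hpow]
        field_simp

theorem tsum_pow_div_factorial_mul_Gamma_le {l q : ℝ} (hl : 0 < l) (hq : 0 ≤ q) :
    ∑' m : ℕ, q ^ m / (m ! * Gamma (m + l)) ≤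
      Gamma (min l (1 / 2)) / (Gamma l * √π) * √(1 + √q) * exp (2 * √q) := by
  set c := Gamma (min l (1 / 2)) / (Gamma l * √π)
  have hz : 0 ≤ 2 * √q := by positivity
  have hterm := pow_div_factorial_mul_Gamma_le hl hq
  have hmaj := (summable_sqrt_succ_mul_cosh_series hz).mul_left c
  calc ∑' m : ℕ, q ^ m / (m ! * Gamma (m + l))
      ≤ ∑' m : ℕ, c * (√(m + 1) * ((2 * √q) ^ (2 * m) / (2 * m)!)) :=
        (hmaj.of_nonneg_of_le (fun m => by positivity) hterm).tsum_le_tsum hterm hmaj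
    _ ≤ c * (√(1 + 2 * √q / 2) * exp (2 * √q)) := by
        rw [tsum_mul_left]
        gcongr
        exact tsum_sqrt_succ_mul_cosh_series_le hz
    _ = c * √(1 + √q) * exp (2 * √q) := by
        rw [mul_div_cancel_left₀ _ two_ne_zero, mul_assoc]

theorem sqrt_one_add_sqrt_le {q : ℝ} (hq : 0 ≤ q) :
    √(1 + √q) ≤ √2 * (1 + q) ^ (1 / 4 : ℝ) := by
  have h : (1 + q) ^ (1 / 4 : ℝ) = √(√(1 + q)) := by
    rw [sqrt_eq_rpow, sqrt_eq_rpow, ← rpow_mul (by positivity)]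
    norm_num
  rw [h, ← sqrt_mul zero_le_two]
  gcongr
  have h1 : 1 ≤ √(1 + q) := one_le_sqrt.2 (by linarith)
  have h2 : √q ≤ √(1 + q) := sqrt_le_sqrt (by linarith)
  linarith

/-- For `λ > 0` there is `C > 0` with
`h_λ(t,x,y) ≤ C t^{-λ} (1 + xy/t²)^{1/4} e^{-(√x-√y)²/t}` for all `t, x, y > 0`. -/
theorem stmt10 (l : ℝ) (hl : 0 < l) :
    ∃ C : ℝ, 0 < C ∧ ∀ t x y : ℝ, 0 < t → 0 < x → 0 < y →
      heatKer l t x y ≤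
        C * t ^ (-l) * (1 + x * y / t ^ 2) ^ ((1 : ℝ) / 4) *
          Real.exp (-(Real.sqrt x - Real.sqrt y) ^ 2 / t) := by
  set K := Gamma (min l (1 / 2)) / (Gamma l * √π)
  refine ⟨2 ^ (-l) * Gamma l * K * √2, by positivity, fun t x y ht hx hy => ?_⟩
  set q := x * y / t ^ 2
  have hsqrt : √q = √x * √y / t := by
    rw [sqrt_div' _ (sq_nonneg t), sqrt_sq ht.le, sqrt_mul hx.le]
  have hexp : -(x + y) / t + 2 * √q = -(√x - √y) ^ 2 / t := by
    rw [hsqrt]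
    field_simp
    linear_combination sq_sqrt hx.le + sq_sqrt hy.le
  calc heatKer l t x y
      = 2 ^ (-l) * t ^ (-l) * Gamma l * exp (-(x + y) / t) *
          ∑' m : ℕ, q ^ m / (m ! * Gamma (m + l)) := by
        rw [heatKer, mul_rpow zero_le_two ht.le]
        ring
    _ ≤ 2 ^ (-l) * t ^ (-l) * Gamma l * exp (-(x + y) / t) *
          (K * (√2 * (1 + q) ^ (1 / 4 : ℝ)) * exp (2 * √q)) := by
        gcongr
        refine (tsum_pow_div_factorial_mul_Gamma_le hl (by positivity)).trans ?_
        gcongr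
        exact sqrt_one_add_sqrt_le (by positivity)
    _ = _ := by
        rw [← hexp, exp_add]
        ring
end
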